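/- arXiv:2102.13240 — 4 statements merged into one kernel-verified Lean document; each statement's English description precedes it below -/
import Mathlib

section
/- Lower bound (Theorem 2), explicit construction. Fix an integer K ≥ 2 and B ∈ [0, 1/(2K)], and set α = √(K²B/(K−1)). Let A = {1,…,K}, let X = (0, K) with μ the uniform probability measure on X, and define f*(x,a) = α if x ∈ (a−1, a] and f*(x,a) = 0 otherwise (rewards are deterministic: r(a) = f*(x,a)). Let F be the class of all functions X × A → [0,1] that do not depend on the context. Then: (i) the average misspecification error equals √B, i.e., max over probability kernels p in K(F) of min_{f∈F} E_{x∼μ} E_{a∼p(·|x)}[(f(x,a) − f*(x,a))²] = B; and (ii) for every probability kernel p in the convex hull of K(F), the expected instantaneous regret of the induced randomized policy satisfies E_{x∼μ} Σ_{a∈A} p(a|x)·(f*(x, π*(x)) − f*(x,a)) = (1 − 1/K)·α = √((K−1)B) ≥ √(KB/2), where π*(x) = a for x ∈ (a−1, a]. -/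
open MeasureTheory Finset

noncomputable section

/-- `q` is a probability vector on the `K` actions. -/
def ProbVec {K : ℕ} (q : Fin K → ℝ) : Prop :=
  (∀ a, 0 ≤ q a) ∧ ∑ a : Fin K, q a = 1

/-- `K(F)`: the set of probability kernels `p` (from contexts to distributions over the `K`
actions) that depend on the context only through some model `f ∈ F`, i.e. for which there
exist `f_p ∈ F` and a probability kernel `g_p` from `[0,1]^K` to distributions over the
actions with `p(a|x) = g_p(a | f_p(x))` for all `(x,a)`. -/
def kernelSet {X : Type*} (K : ℕ) (F : Set (X → Fin K → ℝ)) : Set (X → Fin K → ℝ) :=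
  { p | (∀ x, ProbVec (p x)) ∧
        ∃ f ∈ F, ∃ g : (Fin K → ℝ) → Fin K → ℝ,
          (∀ v, ProbVec (g v)) ∧ ∀ x a, p x a = g (f x) a }

/-- The model class `F` of the lower-bound construction: all functions `X × A → [0,1]` that
do not depend on the context. -/
def contextFreeClass (K : ℕ) : Set (ℝ → Fin K → ℝ) :=
  { f | (∀ x a, f x a ∈ Set.Icc (0:ℝ) 1) ∧ ∀ x y : ℝ, f x = f y }

/-- The uniform probability measure on the interval `(0, K)`. -/
def unifMeasure (K : ℕ) : Measure ℝ :=
  (ENNReal.ofReal (K : ℝ))⁻¹ • volume.restrict (Set.Ioo (0:ℝ) (K:ℝ))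

/-- The true reward model of the lower-bound construction: arm `a` (identified with the
interval `(a, a+1]` for `a ∈ {0,…,K−1}`, i.e. the interval `(a−1, a]` for arms `1,…,K`)
has reward `α` on its interval and `0` elsewhere; rewards are deterministic. -/
def fstarLB (K : ℕ) (α : ℝ) (x : ℝ) (a : Fin K) : ℝ :=
  if x ∈ Set.Ioc (a : ℝ) ((a : ℝ) + 1) then α else 0

lemma vol_piece (K : ℕ) (a : Fin K) :
    volume (Set.Ioo (0:ℝ) (K:ℝ) ∩ Set.Ioc (a:ℝ) ((a:ℝ)+1)) = 1 := by
  have ha0 : (0:ℝ) ≤ (a:ℝ) := by positivity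
  have ha1 : (a:ℝ) + 1 ≤ (K:ℝ) := by exact_mod_cast Nat.succ_le_of_lt a.isLt
  have h1 : volume (Set.Ioo (0:ℝ) (K:ℝ) ∩ Set.Ioc (a:ℝ) ((a:ℝ)+1))
      ≤ volume (Set.Ioc (a:ℝ) ((a:ℝ)+1)) := measure_mono Set.inter_subset_right
  have h2 : volume (Set.Ioo (a:ℝ) ((a:ℝ)+1))
      ≤ volume (Set.Ioo (0:ℝ) (K:ℝ) ∩ Set.Ioc (a:ℝ) ((a:ℝ)+1)) := by
    apply measure_mono
    intro x hx
    exact ⟨⟨lt_of_le_of_lt ha0 hx.1, lt_of_lt_of_le hx.2 ha1⟩, hx.1, le_of_lt hx.2⟩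
  rw [Real.volume_Ioc] at h1
  rw [Real.volume_Ioo] at h2
  simp only [add_sub_cancel_left, ENNReal.ofReal_one] at h1 h2
  exact le_antisymm h1 h2

lemma indic_int (K : ℕ) (a : Fin K) (d : ℝ) :
    Integrable (fun x => Set.indicator (Set.Ioc (a:ℝ) ((a:ℝ)+1)) (fun _ => d) x)
      (volume.restrict (Set.Ioo (0:ℝ) (K:ℝ))) := by
  have hfin : volume (Set.Ioo (0:ℝ) (K:ℝ)) < ⊤ := by
    rw [Real.volume_Ioo]; exact ENNReal.ofReal_lt_top
  refine (integrable_indicator_iff measurableSet_Ioc).2 ?_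
  refine integrableOn_const ?_ (by simp)
  rw [Measure.restrict_apply measurableSet_Ioc]
  exact (lt_of_le_of_lt (measure_mono Set.inter_subset_right) hfin).ne

lemma key_integral (K : ℕ) (c d : Fin K → ℝ) :
    ∫ x in Set.Ioo (0:ℝ) (K:ℝ),
      ∑ a : Fin K, (c a + Set.indicator (Set.Ioc (a:ℝ) ((a:ℝ)+1)) (fun _ => d a) x) ∂volume
    = (K:ℝ) * ∑ a, c a + ∑ a, d a := by
  have hfin : volume (Set.Ioo (0:ℝ) (K:ℝ)) < ⊤ := by
    rw [Real.volume_Ioo]; exact ENNReal.ofReal_lt_top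
  have hint : ∀ a : Fin K,
      Integrable (fun x => c a + Set.indicator (Set.Ioc (a:ℝ) ((a:ℝ)+1)) (fun _ => d a) x)
        (volume.restrict (Set.Ioo (0:ℝ) (K:ℝ))) := fun a =>
    Integrable.add (integrableOn_const hfin.ne (by simp)) (indic_int K a (d a))
  rw [integral_finset_sum _ (fun a _ => hint a)]
  have step : ∀ a : Fin K,
      (∫ x in Set.Ioo (0:ℝ) (K:ℝ),
        (c a + Set.indicator (Set.Ioc (a:ℝ) ((a:ℝ)+1)) (fun _ => d a) x) ∂volume)
      = (K:ℝ) * c a + d a := by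
    intro a
    rw [integral_add (integrableOn_const (C := c a) hfin.ne (by simp)) (indic_int K a (d a)),
      setIntegral_const, setIntegral_indicator measurableSet_Ioc, setIntegral_const,
      measureReal_def, measureReal_def, Real.volume_Ioo, vol_piece]
    simp only [sub_zero, smul_eq_mul, ENNReal.toReal_one, one_mul,
      ENNReal.toReal_ofReal (Nat.cast_nonneg K)]
  rw [Finset.sum_congr rfl (fun a _ => step a), Finset.sum_add_distrib, ← Finset.mul_sum]

lemma unif_integral (K : ℕ) (f : ℝ → ℝ) :
    ∫ x, f x ∂(unifMeasure K) = (K:ℝ)⁻¹ * ∫ x in Set.Ioo (0:ℝ) (K:ℝ), f x ∂volume := by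
  rw [unifMeasure, integral_smul_measure, smul_eq_mul, ENNReal.toReal_inv,
    ENNReal.toReal_ofReal (Nat.cast_nonneg K)]

lemma cover (K : ℕ) (x : ℝ) (hx : x ∈ Set.Ioo (0:ℝ) (K:ℝ)) :
    ∃ a : Fin K, x ∈ Set.Ioc (a:ℝ) ((a:ℝ)+1) := by
  obtain ⟨hx0, hxK⟩ := hx
  have h1 : 1 ≤ ⌈x⌉₊ := Nat.one_le_ceil_iff.2 hx0
  have hlt : (⌈x⌉₊ : ℝ) < x + 1 := Nat.ceil_lt_add_one (le_of_lt hx0)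
  have hK : ⌈x⌉₊ - 1 < K := by
    have : ((⌈x⌉₊ - 1 : ℕ) : ℝ) < (K:ℝ) := by
      rw [Nat.cast_sub h1]
      push_cast
      linarith [lt_trans (by linarith : (⌈x⌉₊:ℝ) - 1 < x) hxK]
    exact_mod_cast this
  refine ⟨⟨⌈x⌉₊ - 1, hK⟩, ?_, ?_⟩
  · show ((⌈x⌉₊ - 1 : ℕ) : ℝ) < x
    rw [Nat.cast_sub h1]; push_cast; linarith
  · show x ≤ ((⌈x⌉₊ - 1 : ℕ) : ℝ) + 1
    rw [Nat.cast_sub h1]; push_cast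
    have := Nat.le_ceil x
    linarith

lemma uniq (K : ℕ) (x : ℝ) (a b : Fin K) (ha : x ∈ Set.Ioc (a:ℝ) ((a:ℝ)+1))
    (hb : x ∈ Set.Ioc (b:ℝ) ((b:ℝ)+1)) : a = b := by
  have h1 : ((a:ℕ):ℝ) = ((b:ℕ):ℝ) := by
    obtain ⟨ha1, ha2⟩ := ha
    obtain ⟨hb1, hb2⟩ := hb
    have : (a:ℕ) = (b:ℕ) := by
      by_contra h
      rcases lt_or_gt_of_ne h with h' | h'
      · have : ((a:ℕ):ℝ) + 1 ≤ ((b:ℕ):ℝ) := by exact_mod_cast Nat.succ_le_of_lt h'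
        linarith
      · have : ((b:ℕ):ℝ) + 1 ≤ ((a:ℕ):ℝ) := by exact_mod_cast Nat.succ_le_of_lt h'
        linarith
    exact_mod_cast this
  exact Fin.ext (by exact_mod_cast h1)

lemma misspec_val (K : ℕ) (hK : 2 ≤ K) (α : ℝ) (q c : Fin K → ℝ) :
    ∫ x, ∑ a : Fin K, q a * (c a - fstarLB K α x a) ^ 2 ∂(unifMeasure K)
      = ∑ a : Fin K, q a * ((c a)^2 + ((c a - α)^2 - (c a)^2) / K) := by
  have hK0 : (K:ℝ) ≠ 0 := by positivity
  rw [unif_integral]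
  have hfun : (fun x => ∑ a : Fin K, q a * (c a - fstarLB K α x a) ^ 2)
      = fun x => ∑ a : Fin K, (q a * (c a)^2 +
          Set.indicator (Set.Ioc (a:ℝ) ((a:ℝ)+1))
            (fun _ => q a * ((c a - α)^2 - (c a)^2)) x) := by
    funext x
    apply Finset.sum_congr rfl
    intro a _
    by_cases hmem : x ∈ Set.Ioc (a:ℝ) ((a:ℝ)+1)
    · simp [fstarLB, hmem, Set.indicator_of_mem]; ring
    · simp [fstarLB, hmem, Set.indicator_of_notMem]
  rw [hfun, key_integral]
  rw [mul_add, Finset.mul_sum, Finset.mul_sum, Finset.mul_sum, ← Finset.sum_add_distrib]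
  apply Finset.sum_congr rfl
  intro a _
  field_simp

lemma prob_const_of_hull (K : ℕ) :
    convexHull ℝ (kernelSet K (contextFreeClass K)) ⊆
      { p : ℝ → Fin K → ℝ | ∃ q : Fin K → ℝ, ProbVec q ∧ ∀ x a, p x a = q a } := by
  apply convexHull_min
  · rintro p ⟨hprob, f, hf, g, hg, hpg⟩
    refine ⟨p 0, hprob 0, fun x a => ?_⟩
    rw [hpg x a, hpg 0 a, hf.2 x 0]
  · rintro p1 ⟨q1, hq1, hp1⟩ p2 ⟨q2, hq2, hp2⟩ t s ht hs hts
    refine ⟨fun a => t * q1 a + s * q2 a, ⟨fun a =>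
      add_nonneg (mul_nonneg ht (hq1.1 a)) (mul_nonneg hs (hq2.1 a)), ?_⟩, fun x a => ?_⟩
    · rw [Finset.sum_add_distrib, ← Finset.mul_sum, ← Finset.mul_sum, hq1.2, hq2.2]
      simpa using hts
    · simp only [Pi.add_apply, Pi.smul_apply, smul_eq_mul, hp1 x a, hp2 x a]

lemma inner_least (K : ℕ) (hK : 2 ≤ K) (B α : ℝ) (hα0 : 0 ≤ α) (hα1 : α ≤ 1)
    (hα2 : α ^ 2 * ((K:ℝ) - 1) = (K:ℝ) ^ 2 * B)
    (q : Fin K → ℝ) (hq : ProbVec q) (p : ℝ → Fin K → ℝ) (hp : ∀ x a, p x a = q a) :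
    IsLeast { w : ℝ | ∃ f ∈ contextFreeClass K,
      w = ∫ x, ∑ a : Fin K, p x a * (f x a - fstarLB K α x a) ^ 2
            ∂(unifMeasure K) } B := by
  have hK0 : (0:ℝ) < (K:ℝ) := by positivity
  have hKR : (1:ℝ) ≤ (K:ℝ) := by exact_mod_cast Nat.one_le_of_lt hK
  -- pointwise lower bound
  have hEB : ∀ r : ℝ, B ≤ r^2 + ((r - α)^2 - r^2) / K := by
    intro r
    rw [← sub_nonneg]
    have hid : r^2 + ((r - α)^2 - r^2) / K - B = ((K:ℝ)*r - α)^2 / (K:ℝ)^2 := by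
      field_simp
      linear_combination hα2
    rw [hid]
    positivity
  have hval : ∀ c : Fin K → ℝ,
      (∫ x, ∑ a : Fin K, p x a * (c a - fstarLB K α x a) ^ 2 ∂(unifMeasure K))
        = ∑ a : Fin K, q a * ((c a)^2 + ((c a - α)^2 - (c a)^2) / K) := by
    intro c
    have : (fun x => ∑ a : Fin K, p x a * (c a - fstarLB K α x a) ^ 2)
        = fun x => ∑ a : Fin K, q a * (c a - fstarLB K α x a) ^ 2 := by
      funext x; exact Finset.sum_congr rfl fun a _ => by rw [hp x a]
    rw [this, misspec_val K hK]
  constructor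
  · refine ⟨fun _ _ => α / (K:ℝ), ⟨fun x a => ⟨by positivity, ?_⟩, fun x y => rfl⟩, ?_⟩
    · rw [div_le_one hK0]; linarith
    · rw [hval]
      have hE : ((α/(K:ℝ)))^2 + (((α/(K:ℝ)) - α)^2 - ((α/(K:ℝ)))^2) / K = B := by
        field_simp
        linear_combination (K:ℝ) * hα2
      rw [Finset.sum_congr rfl fun a _ => by rw [hE], ← Finset.sum_mul, hq.2, one_mul]
  · rintro w ⟨f, hf, rfl⟩
    have hfx : ∀ x, f x = f 0 := fun x => hf.2 x 0
    have : (fun x => ∑ a : Fin K, p x a * (f x a - fstarLB K α x a) ^ 2)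
        = fun x => ∑ a : Fin K, p x a * (f 0 a - fstarLB K α x a) ^ 2 := by
      funext x; rw [hfx x]
    rw [this, hval]
    calc B = ∑ a : Fin K, q a * B := by rw [← Finset.sum_mul, hq.2, one_mul]
      _ ≤ _ := Finset.sum_le_sum fun a _ =>
          mul_le_mul_of_nonneg_left (hEB (f 0 a)) (hq.1 a)

lemma regret_val (K : ℕ) (hK : 2 ≤ K) (α : ℝ) (pistar : ℝ → Fin K)
    (hpistar : ∀ a : Fin K, ∀ x ∈ Set.Ioc (a:ℝ) ((a:ℝ) + 1), pistar x = a)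
    (q : Fin K → ℝ) (hq : ProbVec q) (p : ℝ → Fin K → ℝ) (hp : ∀ x a, p x a = q a) :
    ∫ x, ∑ a : Fin K, p x a * (fstarLB K α x (pistar x) - fstarLB K α x a)
        ∂(unifMeasure K) = (1 - 1 / (K:ℝ)) * α := by
  have hK0 : (K:ℝ) ≠ 0 := by positivity
  rw [unif_integral]
  have hcong : ∀ x ∈ Set.Ioo (0:ℝ) (K:ℝ),
      ∑ a : Fin K, p x a * (fstarLB K α x (pistar x) - fstarLB K α x a)
      = ∑ a : Fin K, ((0:ℝ) + Set.indicator (Set.Ioc (a:ℝ) ((a:ℝ)+1))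
          (fun _ => α * (1 - q a)) x) := by
    intro x hx
    obtain ⟨a0, ha0⟩ := cover K x hx
    have hpi : pistar x = a0 := hpistar a0 x ha0
    have hstar : fstarLB K α x (pistar x) = α := by
      rw [hpi]; simp [fstarLB, ha0]
    have hL : ∑ a : Fin K, p x a * (fstarLB K α x (pistar x) - fstarLB K α x a)
        = α - α * q a0 := by
      have : ∀ a : Fin K, p x a * (fstarLB K α x (pistar x) - fstarLB K α x a)
          = q a * α - q a * fstarLB K α x a := by
        intro a; rw [hp, hstar]; ring
      rw [Finset.sum_congr rfl fun a _ => this a, Finset.sum_sub_distrib,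
        ← Finset.sum_mul, hq.2, one_mul]
      congr 1
      rw [Finset.sum_eq_single a0]
      · simp [fstarLB, ha0]; ring
      · intro b _ hb
        have : x ∉ Set.Ioc (b:ℝ) ((b:ℝ)+1) := fun hmem => hb (uniq K x b a0 hmem ha0)
        simp [fstarLB, this]
      · intro h; exact absurd (Finset.mem_univ a0) h
    have hR : ∑ a : Fin K, ((0:ℝ) + Set.indicator (Set.Ioc (a:ℝ) ((a:ℝ)+1))
          (fun _ => α * (1 - q a)) x) = α - α * q a0 := by
      rw [Finset.sum_eq_single a0]
      · rw [Set.indicator_of_mem ha0]; ring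
      · intro b _ hb
        have : x ∉ Set.Ioc (b:ℝ) ((b:ℝ)+1) := fun hmem => hb (uniq K x b a0 hmem ha0)
        rw [Set.indicator_of_notMem this]; ring
      · intro h; exact absurd (Finset.mem_univ a0) h
    rw [hL, hR]
  rw [setIntegral_congr_fun measurableSet_Ioo hcong, key_integral]
  have hsum : ∑ a : Fin K, α * (1 - q a) = α * ((K:ℝ) - 1) := by
    simp only [mul_sub, mul_one, Finset.sum_sub_distrib, ← Finset.mul_sum, hq.2]
    simp [Finset.card_univ]
    ring
  rw [hsum]
  simp only [Finset.sum_const_zero, mul_zero, zero_add]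
  field_simp

/-- Lower bound (Theorem 2), explicit construction. With `α = √(K²B/(K−1))`:
(i) the average misspecification error equals `√B`, i.e. the maximum over kernels
`p ∈ K(F)` of `min_{f∈F} E_{x∼μ} E_{a∼p(·|x)}[(f(x,a) − f*(x,a))²]` is `B`;
(ii) for every probability kernel `p` in the convex hull of `K(F)`, the expected
instantaneous regret of the induced randomized policy equals
`(1 − 1/K)·α = √((K−1)B) ≥ √(KB/2)`. -/
theorem lower_bound_construction (K : ℕ) (hK : 2 ≤ K)
    (B : ℝ) (hB : B ∈ Set.Icc (0:ℝ) (1 / (2 * K)))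
    (α : ℝ) (hα : α = Real.sqrt ((K:ℝ) ^ 2 * B / ((K:ℝ) - 1)))
    (pistar : ℝ → Fin K)
    (hpistar : ∀ a : Fin K, ∀ x ∈ Set.Ioc (a:ℝ) ((a:ℝ) + 1), pistar x = a) :
    -- (i) the average misspecification error equals √B
    IsGreatest { v : ℝ | ∃ p ∈ kernelSet K (contextFreeClass K),
        IsLeast { w : ℝ | ∃ f ∈ contextFreeClass K,
          w = ∫ x, ∑ a : Fin K, p x a * (f x a - fstarLB K α x a) ^ 2
                ∂(unifMeasure K) } v } B ∧
    -- (ii) expected instantaneous regret of every kernel in the convex hull of K(F)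
    ∀ p ∈ convexHull ℝ (kernelSet K (contextFreeClass K)),
      (∫ x, ∑ a : Fin K, p x a * (fstarLB K α x (pistar x) - fstarLB K α x a)
          ∂(unifMeasure K) = (1 - 1 / (K:ℝ)) * α ∧
        (1 - 1 / (K:ℝ)) * α = Real.sqrt (((K:ℝ) - 1) * B) ∧
        Real.sqrt ((K:ℝ) * B / 2) ≤ Real.sqrt (((K:ℝ) - 1) * B)) := by
  have hK0 : (0:ℝ) < (K:ℝ) := by positivity
  have hK2 : (2:ℝ) ≤ (K:ℝ) := by exact_mod_cast hK
  have hKne : (K:ℝ) ≠ 0 := ne_of_gt hK0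
  have hB0 : 0 ≤ B := hB.1
  have hB1 : B ≤ 1 / (2 * K) := hB.2
  have hα0 : 0 ≤ α := hα ▸ Real.sqrt_nonneg _
  have hK1 : (0:ℝ) < (K:ℝ) - 1 := by linarith
  have hαsq : α ^ 2 = (K:ℝ) ^ 2 * B / ((K:ℝ) - 1) := by
    rw [hα, Real.sq_sqrt]
    exact div_nonneg (by positivity) hK1.le
  have hα2 : α ^ 2 * ((K:ℝ) - 1) = (K:ℝ) ^ 2 * B := by
    rw [hαsq, div_mul_cancel₀ _ (ne_of_gt hK1)]
  have hα1 : α ≤ 1 := by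
    have hsq1 : α ^ 2 ≤ 1 := by
      have h1 : (K:ℝ)^2 * B ≤ (K:ℝ) / 2 := by
        have := mul_le_mul_of_nonneg_left hB1 (le_of_lt (by positivity : (0:ℝ) < (K:ℝ)^2))
        calc (K:ℝ)^2 * B ≤ (K:ℝ)^2 * (1 / (2*K)) := this
          _ = (K:ℝ)/2 := by field_simp
      nlinarith
    nlinarith
  constructor
  · constructor
    · -- membership: the uniform kernel
      refine ⟨fun _ _ => (K:ℝ)⁻¹, ⟨fun x => ⟨fun a => by positivity, ?_⟩,
        ⟨fun _ _ => 0, ⟨fun x a => ⟨le_refl 0, zero_le_one⟩, fun x y => rfl⟩,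
          fun _ _ => (K:ℝ)⁻¹, fun v => ⟨fun a => by positivity, ?_⟩, fun x a => rfl⟩⟩, ?_⟩
      · simp [Finset.card_univ, mul_inv_cancel₀ hKne]
      · simp [Finset.card_univ, mul_inv_cancel₀ hKne]
      · exact inner_least K hK B α hα0 hα1 hα2 (fun _ => (K:ℝ)⁻¹)
          ⟨fun a => by positivity, by simp [Finset.card_univ, mul_inv_cancel₀ hKne]⟩ _ (fun x a => rfl)
    · -- upper bound
      rintro v ⟨p, ⟨hprob, f, hf, g, hg, hpg⟩, hleast⟩
      have hp : ∀ x a, p x a = p 0 a := fun x a => by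
        rw [hpg x a, hpg 0 a, hf.2 x 0]
      exact (hleast.unique (inner_least K hK B α hα0 hα1 hα2 (p 0) (hprob 0) p hp)).le
  · intro p hp
    obtain ⟨q, hq, hpc⟩ := prob_const_of_hull K hp
    refine ⟨regret_val K hK α pistar hpistar q hq p hpc, ?_, ?_⟩
    · have hnn : 0 ≤ (1 - 1 / (K:ℝ)) * α := by
        apply mul_nonneg _ hα0
        rw [sub_nonneg, div_le_one hK0]
        linarith
      have hsq : ((1 - 1 / (K:ℝ)) * α) ^ 2 = ((K:ℝ) - 1) * B := by
        field_simp
        linear_combination hα2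
      rw [← hsq, Real.sqrt_sq hnn]
    · apply Real.sqrt_le_sqrt
      nlinarith
end
end

section
/- Lemma 5 (expected regret of the action selection kernel under its own model). Let A be a finite action set with |A| = K ≥ 2, let μ be a probability measure on a context space X, let f̂ : X × A → [0,1] be measurable, let γ > 0, and let p be the action selection kernel associated with f̂ and γ. Then E_{x∼μ}[ Σ_{a∈A} p(a|x) · ( f̂(x, â(x)) − f̂(x,a) ) ] ≤ K/γ, where â(x) ∈ argmax_a f̂(x,a). -/
open Finset MeasureTheory

noncomputable section

/-- The action selection kernel associated with a model `fhat`, a predicted-best-action map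
`ahat`, and exploitation parameter `γ`. -/
def selKernel {X : Type*} (K : ℕ) (fhat : X → Fin K → ℝ) (ahat : X → Fin K)
    (γ : ℝ) (x : X) (a : Fin K) : ℝ :=
  if a = ahat x then
    1 - ∑ a' ∈ univ.filter (· ≠ ahat x), 1 / (K + γ * (fhat x (ahat x) - fhat x a'))
  else 1 / (K + γ * (fhat x (ahat x) - fhat x a))

/-! Each action `a` contributes at most `1/γ` to the model regret: its gap `Δ` is weighted by
`1/(K + γΔ) ≤ 1/(γΔ)`, and the predicted best action has gap `0`. Summing over the `K` actions
gives `K/γ` for every context, hence also in expectation. -/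

theorem one_div_add_mul_mul_le_one_div {α : Type*} [Field α] [LinearOrder α] [IsStrictOrderedRing α]
    {k γ d : α} (hk : 0 ≤ k) (hγ : 0 < γ) (hd : 0 ≤ d) :
    1 / (k + γ * d) * d ≤ 1 / γ := by
  rcases (add_nonneg hk (mul_nonneg hγ.le hd)).eq_or_lt with hden | hden
  · rw [← hden, div_zero, zero_mul]
    positivity
  · rw [one_div_mul_eq_div, div_le_div_iff₀ hden hγ]
    nlinarith

theorem selKernel_mul_gap_le {X : Type*} (K : ℕ) (fhat : X → Fin K → ℝ) (ahat : X → Fin K)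
    {γ : ℝ} (hγ : 0 < γ) (x : X) (hahat : ∀ a, fhat x a ≤ fhat x (ahat x)) (a : Fin K) :
    selKernel K fhat ahat γ x a * (fhat x (ahat x) - fhat x a) ≤ 1 / γ := by
  by_cases ha : a = ahat x
  · rw [ha, sub_self, mul_zero]
    positivity
  · rw [selKernel, if_neg ha]
    exact one_div_add_mul_mul_le_one_div K.cast_nonneg hγ (sub_nonneg.2 (hahat a))

theorem sum_selKernel_mul_gap_le {X : Type*} (K : ℕ) (fhat : X → Fin K → ℝ) (ahat : X → Fin K)
    {γ : ℝ} (hγ : 0 < γ) (x : X) (hahat : ∀ a, fhat x a ≤ fhat x (ahat x)) :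
    ∑ a : Fin K, selKernel K fhat ahat γ x a * (fhat x (ahat x) - fhat x a) ≤ K / γ :=
  calc ∑ a : Fin K, selKernel K fhat ahat γ x a * (fhat x (ahat x) - fhat x a)
      ≤ ∑ _a : Fin K, 1 / γ := sum_le_sum fun a _ => selKernel_mul_gap_le K fhat ahat hγ x hahat a
    _ = K / γ := by rw [sum_const, card_univ, Fintype.card_fin, nsmul_eq_mul, mul_one_div]

/-- No integrability is needed: a non-integrable function has integral `0 ≤ c`. -/
theorem integral_le_of_forall_le {X : Type*} [MeasurableSpace X] {μ : Measure X}
    [IsProbabilityMeasure μ] {f : X → ℝ} {c : ℝ} (hc : 0 ≤ c) (hf : ∀ x, f x ≤ c) :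
    ∫ x, f x ∂μ ≤ c := by
  by_cases hint : Integrable f μ
  · calc ∫ x, f x ∂μ ≤ ∫ _x, c ∂μ := integral_mono hint (integrable_const c) hf
      _ = c := by simp
  · rw [integral_undef hint]
    exact hc

theorem selKernel_expected_model_regret_general {X : Type*} [MeasurableSpace X]
    (μ : Measure X) [IsProbabilityMeasure μ]
    (K : ℕ)
    (fhat : X → Fin K → ℝ)
    (γ : ℝ) (hγ : 0 < γ)
    (ahat : X → Fin K) (hahat : ∀ x a, fhat x a ≤ fhat x (ahat x)) :
    ∫ x, ∑ a : Fin K, selKernel K fhat ahat γ x a * (fhat x (ahat x) - fhat x a) ∂μ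
      ≤ K / γ :=
  integral_le_of_forall_le (by positivity) fun x =>
    sum_selKernel_mul_gap_le K fhat ahat hγ x (hahat x)

/-- Lemma 5: the expected regret of the action selection kernel, measured with respect to its
own model `fhat`, is at most `K/γ`:
`E_{x∼μ}[ Σ_a p(a|x)·(fhat(x, ahat x) − fhat(x,a)) ] ≤ K/γ`. -/
theorem selKernel_expected_model_regret {X : Type*} [MeasurableSpace X]
    (μ : Measure X) [IsProbabilityMeasure μ]
    (K : ℕ) (hK : 2 ≤ K)
    (fhat : X → Fin K → ℝ) (hmeas : ∀ a, Measurable fun x => fhat x a)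
    (hfhat : ∀ x a, fhat x a ∈ Set.Icc (0:ℝ) 1)
    (γ : ℝ) (hγ : 0 < γ)
    (ahat : X → Fin K) (hahat : ∀ x a, fhat x a ≤ fhat x (ahat x)) :
    ∫ x, ∑ a : Fin K, selKernel K fhat ahat γ x a * (fhat x (ahat x) - fhat x a) ∂μ
      ≤ K / γ :=
  selKernel_expected_model_regret_general μ K fhat γ hγ ahat hahat
end
end

section
/- Inverse-probability bound for the action selection kernel. Let A be a finite action set with |A| = K ≥ 2, let μ be a probability measure on a context space X, let f̂ : X × A → [0,1] be measurable, let γ > 0, and let p be the action selection kernel associated with f̂ and γ. Then for every policy π : X → A, the expected inverse probability satisfies V(p, π) := E_{x∼μ}[ 1 / p(π(x)|x) ] ≤ K + γ · E_{x∼μ}[ f̂(x, â(x)) − f̂(x, π(x)) ], where â(x) ∈ argmax_a f̂(x,a); in particular V(p, π) ≤ K + γ·Reg_{f̂}(π). -/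
open Finset MeasureTheory

noncomputable section

theorem measurable_apply_of_forall_le {X ι α : Type*} [MeasurableSpace X] [Fintype ι] [Nonempty ι]
    [SemilatticeSup α] [MeasurableSpace α] [MeasurableSup₂ α]
    {f : X → ι → α} (hf : ∀ i, Measurable fun x => f x i) {g : X → ι}
    (hg : ∀ x i, f x i ≤ f x (g x)) : Measurable fun x => f x (g x) := by
  have hsup : (fun x => f x (g x)) = univ.sup' univ_nonempty fun i x => f x i := by
    ext x
    rw [Finset.sup'_apply]
    exact le_antisymm (le_sup' (f x) (mem_univ _)) (sup'_le _ _ fun i _ => hg x i)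
  rw [hsup]
  exact Finset.measurable_sup' _ fun i _ => hf i

section selKernel

variable {X : Type*} {K : ℕ} {fhat : X → Fin K → ℝ} {ahat : X → Fin K} {γ : ℝ} {x : X}

theorem selKernel_of_ne {a : Fin K} (h : a ≠ ahat x) :
    selKernel K fhat ahat γ x a = 1 / (K + γ * (fhat x (ahat x) - fhat x a)) :=
  if_neg h

theorem natCast_le_selKernel_denom (hγ : 0 ≤ γ) (hx : ∀ a, fhat x a ≤ fhat x (ahat x))
    (a : Fin K) : (K : ℝ) ≤ K + γ * (fhat x (ahat x) - fhat x a) :=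
  le_add_of_nonneg_right (mul_nonneg hγ (sub_nonneg.2 (hx a)))

/-- Each of the `K - 1` other actions receives at most `1 / K`, leaving at least `1 / K` for
`ahat x`. -/
theorem one_div_le_selKernel_self (hK : 0 < K) (hγ : 0 ≤ γ)
    (hx : ∀ a, fhat x a ≤ fhat x (ahat x)) :
    1 / (K : ℝ) ≤ selKernel K fhat ahat γ x (ahat x) := by
  have hKpos : (0 : ℝ) < K := Nat.cast_pos.2 hK
  have hcard : ((univ.filter (· ≠ ahat x)).card : ℝ) = K - 1 := by
    rw [filter_ne', card_erase_of_mem (mem_univ _), card_univ, Fintype.card_fin,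
      Nat.cast_sub hK, Nat.cast_one]
  have hsum : ∑ a ∈ univ.filter (· ≠ ahat x), 1 / ((K : ℝ) + γ * (fhat x (ahat x) - fhat x a))
      ≤ (K - 1) * (1 / K) := by
    rw [← hcard, ← nsmul_eq_mul]
    exact sum_le_card_nsmul _ _ _ fun a _ =>
      one_div_le_one_div_of_le hKpos (natCast_le_selKernel_denom hγ hx a)
  have hrest : (K - 1 : ℝ) * (1 / K) = 1 - 1 / K := by field_simp
  rw [selKernel, if_pos rfl]
  linarith

theorem selKernel_pos (hK : 0 < K) (hγ : 0 ≤ γ) (hx : ∀ a, fhat x a ≤ fhat x (ahat x))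
    (a : Fin K) : 0 < selKernel K fhat ahat γ x a := by
  by_cases h : a = ahat x
  · subst h
    exact lt_of_lt_of_le (by positivity) (one_div_le_selKernel_self hK hγ hx)
  · rw [selKernel_of_ne h, one_div_pos]
    exact lt_of_lt_of_le (Nat.cast_pos.2 hK) (natCast_le_selKernel_denom hγ hx a)

theorem one_div_selKernel_le (hK : 0 < K) (hγ : 0 ≤ γ) (hx : ∀ a, fhat x a ≤ fhat x (ahat x))
    (a : Fin K) :
    1 / selKernel K fhat ahat γ x a ≤ K + γ * (fhat x (ahat x) - fhat x a) := by
  by_cases h : a = ahat x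
  · subst h
    rw [sub_self, mul_zero, add_zero]
    simpa using one_div_le_one_div_of_le (by positivity) (one_div_le_selKernel_self hK hγ hx)
  · rw [selKernel_of_ne h, one_div_one_div]

end selKernel

/-- Inverse-probability bound for the action selection kernel: for every policy `π`,
`V(p, π) = E_{x∼μ}[1/p(π(x)|x)] ≤ K + γ·E_{x∼μ}[fhat(x, ahat x) − fhat(x, π(x))]`,
i.e. `V(p,π) ≤ K + γ·Reg_{fhat}(π)`. -/
theorem selKernel_inverse_probability_bound {X : Type*} [MeasurableSpace X]
    (μ : Measure X) [IsProbabilityMeasure μ]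
    (K : ℕ) (hK : 2 ≤ K)
    (fhat : X → Fin K → ℝ) (hmeas : ∀ a, Measurable fun x => fhat x a)
    (hfhat : ∀ x a, fhat x a ∈ Set.Icc (0:ℝ) 1)
    (γ : ℝ) (hγ : 0 < γ)
    (ahat : X → Fin K) (hahat : ∀ x a, fhat x a ≤ fhat x (ahat x)) :
    ∀ π : X → Fin K, Measurable π →
      ∫ x, 1 / selKernel K fhat ahat γ x (π x) ∂μ
        ≤ K + γ * ∫ x, (fhat x (ahat x) - fhat x (π x)) ∂μ := by
  intro π hπ
  have hK0 : 0 < K := by omega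
  have : NeZero K := ⟨hK0.ne'⟩
  have hmeas_best : Measurable fun x => fhat x (ahat x) := measurable_apply_of_forall_le hmeas hahat
  have hmeas_π : Measurable fun x => fhat x (π x) :=
    (measurable_from_prod_countable_left (f := fun p : X × Fin K => fhat p.1 p.2) hmeas).comp
      (measurable_id.prodMk hπ)
  have hgap : Integrable (fun x => fhat x (ahat x) - fhat x (π x)) μ :=
    .of_bound (hmeas_best.sub hmeas_π).aestronglyMeasurable 1 <| .of_forall fun x => by
      rw [← dist_eq_norm]
      exact Real.dist_le_of_mem_Icc_01 (hfhat x _) (hfhat x _)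
  calc ∫ x, 1 / selKernel K fhat ahat γ x (π x) ∂μ
      ≤ ∫ x, ((K : ℝ) + γ * (fhat x (ahat x) - fhat x (π x))) ∂μ :=
        integral_mono_of_nonneg
          (.of_forall fun x => (one_div_pos.2 (selKernel_pos hK0 hγ.le (hahat x) _)).le)
          ((integrable_const _).add (hgap.const_mul γ))
          (.of_forall fun x => one_div_selKernel_le hK0 hγ.le (hahat x) _)
    _ = K + γ * ∫ x, (fhat x (ahat x) - fhat x (π x)) ∂μ := by
        rw [integral_add (integrable_const _) (hgap.const_mul γ), integral_const,
          integral_const_mul, probReal_univ, one_smul]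
end
end

section
/- Lemma 8 (expected true regret of the action selection kernel). Let C₀ = 5.15, let A be a finite action set with |A| = K ≥ 2, μ a probability measure on a context space X, f*, f̂ : X × A → [0,1] measurable, γ > 0, and let p be the action selection kernel associated with f̂ and γ. Suppose that for every policy π : X → A, Reg(π) ≤ 2·Reg_{f̂}(π) + C₀K/γ, where Reg(π) = E_{x∼μ}[f*(x, π*(x)) − f*(x, π(x))] with π*(x) ∈ argmax_a f*(x,a) and Reg_{f̂}(π) = E_{x∼μ}[f̂(x, â(x)) − f̂(x, π(x))] with â(x) ∈ argmax_a f̂(x,a). Then the expected true regret of the kernel satisfies E_{x∼μ}[ Σ_{a∈A} p(a|x) · ( f*(x, π*(x)) − f*(x,a) ) ] ≤ (2 + C₀)·K/γ. -/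
open Finset MeasureTheory

noncomputable section

namespace SelAux

variable {X : Type*} {K : ℕ} {fhat : X → Fin K → ℝ} {ahat : X → Fin K} {γ : ℝ}

/-- Individual kernel weight. -/
def sk (fhat : X → Fin K → ℝ) (ahat : X → Fin K) (γ : ℝ) (x : X) (b : Fin K) : ℝ :=
  1 / (K + γ * (fhat x (ahat x) - fhat x b))

def Phi (fhat : X → Fin K → ℝ) (ahat : X → Fin K) (γ : ℝ) (x : X) (a : Fin K) : ℝ :=
  ∑ b ∈ univ.filter (· ≤ a), sk fhat ahat γ x b

def Phi' (fhat : X → Fin K → ℝ) (ahat : X → Fin K) (γ : ℝ) (x : X) (a : Fin K) : ℝ :=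
  ∑ b ∈ univ.filter (· < a), sk fhat ahat γ x b

def Tot (fhat : X → Fin K → ℝ) (ahat : X → Fin K) (γ : ℝ) (x : X) : ℝ :=
  ∑ b : Fin K, sk fhat ahat γ x b

/-- Inverse-CDF action selector. -/
def selP (fhat : X → Fin K → ℝ) (ahat : X → Fin K) (γ : ℝ) (u : ℝ) (x : X) : Fin K :=
  if hs : (univ.filter fun a => u < Phi fhat ahat γ x a).Nonempty then
    (univ.filter fun a => u < Phi fhat ahat γ x a).min' hs
  else ahat x

section PointLemmas

variable (hγ : 0 < γ) (hK : 0 < K) {x : X} (hah : ∀ b, fhat x b ≤ fhat x (ahat x))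

include hγ hK hah

lemma denom_pos (b : Fin K) : 0 < (K : ℝ) + γ * (fhat x (ahat x) - fhat x b) := by
  have h1 : 0 ≤ γ * (fhat x (ahat x) - fhat x b) :=
    mul_nonneg hγ.le (sub_nonneg.2 (hah b))
  have h2 : (0:ℝ) < K := by exact_mod_cast hK
  linarith

lemma sk_pos (b : Fin K) : 0 < sk fhat ahat γ x b :=
  one_div_pos.2 (denom_pos hγ hK hah b)

lemma sk_le (b : Fin K) : sk fhat ahat γ x b ≤ 1 / K := by
  have h1 : 0 ≤ γ * (fhat x (ahat x) - fhat x b) :=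
    mul_nonneg hγ.le (sub_nonneg.2 (hah b))
  have h2 : (0:ℝ) < K := by exact_mod_cast hK
  exact one_div_le_one_div_of_le h2 (by linarith)

lemma sum_sk_mono {s t : Finset (Fin K)} (hst : s ⊆ t) :
    ∑ b ∈ s, sk fhat ahat γ x b ≤ ∑ b ∈ t, sk fhat ahat γ x b :=
  Finset.sum_le_sum_of_subset_of_nonneg hst fun b _ _ => (sk_pos hγ hK hah b).le

lemma Phi'_nonneg (a : Fin K) : 0 ≤ Phi' fhat ahat γ x a :=
  Finset.sum_nonneg fun b _ => (sk_pos hγ hK hah b).le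

lemma Phi'_le_Phi (a : Fin K) : Phi' fhat ahat γ x a ≤ Phi fhat ahat γ x a :=
  sum_sk_mono hγ hK hah (by
    intro b hb
    simp only [Finset.mem_filter, Finset.mem_univ, true_and] at hb ⊢
    exact hb.le)

lemma Phi_le_Tot (a : Fin K) : Phi fhat ahat γ x a ≤ Tot fhat ahat γ x :=
  sum_sk_mono hγ hK hah (Finset.filter_subset _ _)

lemma Tot_nonneg : 0 ≤ Tot fhat ahat γ x :=
  Finset.sum_nonneg fun b _ => (sk_pos hγ hK hah b).le

lemma Tot_le_one : Tot fhat ahat γ x ≤ 1 := by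
  have h2 : (0:ℝ) < K := by exact_mod_cast hK
  calc Tot fhat ahat γ x ≤ ∑ _b : Fin K, 1 / (K:ℝ) :=
        Finset.sum_le_sum fun b _ => sk_le hγ hK hah b
    _ = K * (1 / (K:ℝ)) := by simp [mul_comm]
    _ = 1 := by field_simp

lemma Phi_mono {a c : Fin K} (hac : a ≤ c) : Phi fhat ahat γ x a ≤ Phi fhat ahat γ x c :=
  sum_sk_mono hγ hK hah (by
    intro b hb
    simp only [Finset.mem_filter, Finset.mem_univ, true_and] at hb ⊢
    exact le_trans hb hac)

lemma Phi_le_Phi' {a c : Fin K} (hac : a < c) : Phi fhat ahat γ x a ≤ Phi' fhat ahat γ x c :=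
  sum_sk_mono hγ hK hah (by
    intro b hb
    simp only [Finset.mem_filter, Finset.mem_univ, true_and] at hb ⊢
    exact lt_of_le_of_lt hb hac)

omit hγ hK hah in
lemma Phi_eq (a : Fin K) :
    Phi fhat ahat γ x a = Phi' fhat ahat γ x a + sk fhat ahat γ x a := by
  have h : univ.filter (· ≤ a) = insert a (univ.filter (· < a)) := by
    ext b
    simp only [Finset.mem_filter, Finset.mem_univ, true_and, Finset.mem_insert]
    constructor
    · intro hb; rcases eq_or_lt_of_le hb with h | h
      · exact Or.inl h
      · exact Or.inr h
    · rintro (rfl | hb); · exact le_refl _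
      · exact hb.le
  rw [Phi, h, Finset.sum_insert (by simp), add_comm]
  rfl

end PointLemmas

section SelLemmas

variable (hγ : 0 < γ) (hK : 0 < K) {x : X} (hah : ∀ b, fhat x b ≤ fhat x (ahat x))

include hγ hK hah

/-- If `u` lies in the interval attached to `a`, the selector picks `a`. -/
lemma selP_eq_of_mem {u : ℝ} {a : Fin K} (h1 : Phi' fhat ahat γ x a ≤ u)
    (h2 : u < Phi fhat ahat γ x a) : selP fhat ahat γ u x = a := by
  set s := univ.filter fun c => u < Phi fhat ahat γ x c with hs
  have ha : a ∈ s := by simp [hs, h2]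
  have hne : s.Nonempty := ⟨a, ha⟩
  have hsel : selP fhat ahat γ u x = s.min' hne := by
    rw [selP, dif_pos hne]
  rw [hsel]
  refine le_antisymm (Finset.min'_le s a ha) ?_
  by_contra hlt
  push_neg at hlt
  have hmem : s.min' hne ∈ s := Finset.min'_mem s hne
  have hult : u < Phi fhat ahat γ x (s.min' hne) := by
    simpa [hs] using hmem
  have : Phi fhat ahat γ x (s.min' hne) ≤ Phi' fhat ahat γ x a :=
    Phi_le_Phi' hγ hK hah hlt
  linarith

/-- For `0 ≤ u < Tot`, the selector's interval contains `u`. -/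
lemma selP_mem {u : ℝ} (h0 : 0 ≤ u) (hu : u < Tot fhat ahat γ x) :
    Phi' fhat ahat γ x (selP fhat ahat γ u x) ≤ u ∧
      u < Phi fhat ahat γ x (selP fhat ahat γ u x) := by
  set s := univ.filter fun c => u < Phi fhat ahat γ x c with hs
  have hKne : Nonempty (Fin K) := ⟨⟨0, hK⟩⟩
  have htop : (univ : Finset (Fin K)).Nonempty := univ_nonempty
  set t := (univ : Finset (Fin K)).max' htop with ht
  have hPhit : Phi fhat ahat γ x t = Tot fhat ahat γ x := by
    rw [Phi, Tot]
    congr 1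
    ext b
    simp [ht, Finset.le_max' _ b (mem_univ b)]
  have htmem : t ∈ s := by simp [hs, hPhit, hu]
  have hne : s.Nonempty := ⟨t, htmem⟩
  have hsel : selP fhat ahat γ u x = s.min' hne := by rw [selP, dif_pos hne]
  set m := s.min' hne with hm
  have hmmem : m ∈ s := Finset.min'_mem s hne
  have humlt : u < Phi fhat ahat γ x m := by simpa [hs] using hmmem
  rw [hsel]
  refine ⟨?_, humlt⟩
  by_cases hlt : (univ.filter (· < m)).Nonempty
  · set c := (univ.filter (· < m)).max' hlt with hc
    have hcm : c < m := by
      have h := Finset.max'_mem (univ.filter (· < m)) hlt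
      rw [Finset.mem_filter] at h
      exact h.2
    have hcnots : c ∉ s := by
      intro hcs
      exact absurd (Finset.min'_le s c hcs) (not_le.2 hcm)
    have hPhic : Phi fhat ahat γ x c ≤ u := by
      by_contra hcon
      exact hcnots (by simp [hs, lt_of_not_ge hcon])
    have heq : Phi' fhat ahat γ x m = Phi fhat ahat γ x c := by
      rw [Phi', Phi]
      congr 1
      ext b
      simp only [Finset.mem_filter, Finset.mem_univ, true_and]
      constructor
      · intro hb; exact Finset.le_max' _ b (by simp [hb])
      · intro hb; exact lt_of_le_of_lt hb hcm
    rw [heq]; exact hPhic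
  · have : univ.filter (· < m) = (∅ : Finset (Fin K)) :=
      Finset.not_nonempty_iff_eq_empty.1 hlt
    rw [Phi', this, Finset.sum_empty]; exact h0

omit hγ hK hah in
/-- If `u` is past the total mass of the `sk` part, the selector picks `ahat x`. -/
lemma selP_eq_ahat {u : ℝ}
    (hPT : ∀ a : Fin K, Phi fhat ahat γ x a ≤ Tot fhat ahat γ x)
    (hu : Tot fhat ahat γ x ≤ u) : selP fhat ahat γ u x = ahat x := by
  have hemp : ¬ (univ.filter fun a => u < Phi fhat ahat γ x a).Nonempty := by
    rintro ⟨a, ha⟩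
    simp only [Finset.mem_filter, Finset.mem_univ, true_and] at ha
    exact absurd ha (not_lt.2 (le_trans (hPT a) hu))
  rw [selP, dif_neg hemp]

omit hγ hK hah in
/-- Decomposition of the kernel weights. -/
lemma kernel_eq (a : Fin K) :
    selKernel K fhat ahat γ x a =
      sk fhat ahat γ x a + (if a = ahat x then 1 - Tot fhat ahat γ x else 0) := by
  by_cases h : a = ahat x
  · rw [selKernel, if_pos h, h, if_pos rfl]
    have h1 : (∑ a' ∈ univ.filter (fun b => b ≠ ahat x), sk fhat ahat γ x a')
        + ∑ a' ∈ univ.filter (fun b => ¬ b ≠ ahat x), sk fhat ahat γ x a'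
        = Tot fhat ahat γ x :=
      Finset.sum_filter_add_sum_filter_not univ (fun b => b ≠ ahat x) (sk fhat ahat γ x)
    have h2 : ∑ a' ∈ univ.filter (fun b => ¬ b ≠ ahat x), sk fhat ahat γ x a'
        = sk fhat ahat γ x (ahat x) := by
      simp [not_not, Finset.filter_eq']
    have h3 : (∑ a' ∈ univ.filter (· ≠ ahat x), 1 / ((K:ℝ) + γ * (fhat x (ahat x) - fhat x a')))
        = ∑ a' ∈ univ.filter (fun b => b ≠ ahat x), sk fhat ahat γ x a' := rfl
    rw [h3]
    linarith
  · rw [selKernel, if_neg h, if_neg h, add_zero]; rfl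

end SelLemmas

section IntegralLemma

variable (hγ : 0 < γ) (hK : 0 < K) {x : X} (hah : ∀ b, fhat x b ≤ fhat x (ahat x))

include hγ hK hah

/-- The selector realizes the kernel as a push-forward of the uniform distribution. -/
lemma integral_selP (v : Fin K → ℝ) :
    ∫ u in Set.Ico (0:ℝ) 1, v (selP fhat ahat γ u x) ∂volume
      = ∑ a, selKernel K fhat ahat γ x a * v a := by
  set T := Tot fhat ahat γ x with hT
  have hT0 : 0 ≤ T := Tot_nonneg hγ hK hah
  have hT1 : T ≤ 1 := Tot_le_one hγ hK hah
  set piece : Fin K → Set ℝ := fun a => Set.Ico (Phi' fhat ahat γ x a) (Phi fhat ahat γ x a)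
    with hpiece
  have hconst : ∀ a : Fin K, ∀ u ∈ piece a, v (selP fhat ahat γ u x) = v a := by
    intro a u hu
    rw [selP_eq_of_mem hγ hK hah hu.1 hu.2]
  have hint : ∀ a : Fin K, IntegrableOn (fun u => v (selP fhat ahat γ u x)) (piece a) volume := by
    intro a
    refine ((integrableOn_const_iff (C := v a)).2 (Or.inr measure_Ico_lt_top)).congr_fun ?_ measurableSet_Ico
    intro u hu
    exact (hconst a u hu).symm
  have hdisj : Pairwise (Function.onFun Disjoint piece) := by
    intro a b hab
    rcases hab.lt_or_gt with h | h
    · refine Set.disjoint_left.2 fun u hua hub => ?_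
      have h1 : Phi fhat ahat γ x a ≤ Phi' fhat ahat γ x b := Phi_le_Phi' hγ hK hah h
      exact absurd (lt_of_lt_of_le hua.2 (le_trans h1 hub.1)) (lt_irrefl u)
    · refine Set.disjoint_left.2 fun u hua hub => ?_
      have h1 : Phi fhat ahat γ x b ≤ Phi' fhat ahat γ x a := Phi_le_Phi' hγ hK hah h
      exact absurd (lt_of_lt_of_le hub.2 (le_trans h1 hua.1)) (lt_irrefl u)
  have hunion : (⋃ a, piece a) = Set.Ico 0 T := by
    apply Set.Subset.antisymm
    · refine Set.iUnion_subset fun a => ?_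
      exact Set.Ico_subset_Ico (Phi'_nonneg hγ hK hah a) (Phi_le_Tot hγ hK hah a)
    · intro u hu
      obtain ⟨h1, h2⟩ := selP_mem hγ hK hah hu.1 hu.2
      exact Set.mem_iUnion.2 ⟨selP fhat ahat γ u x, h1, h2⟩
  have hpieceval : ∀ a : Fin K,
      ∫ u in piece a, v (selP fhat ahat γ u x) ∂volume = sk fhat ahat γ x a * v a := by
    intro a
    rw [setIntegral_congr_fun measurableSet_Ico (hconst a), setIntegral_const,
      measureReal_def, Real.volume_Ico, ENNReal.toReal_ofReal
        (sub_nonneg.2 (Phi'_le_Phi hγ hK hah a)), smul_eq_mul]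
    congr 1
    have := Phi_eq (fhat := fhat) (ahat := ahat) (γ := γ) (x := x) a
    linarith
  have hahsel : ∀ u ∈ Set.Ico T 1, v (selP fhat ahat γ u x) = v (ahat x) := by
    intro u hu
    rw [selP_eq_ahat (Phi_le_Tot hγ hK hah) hu.1]
  have hint0T : IntegrableOn (fun u => v (selP fhat ahat γ u x)) (Set.Ico 0 T) volume := by
    rw [← hunion]
    exact integrableOn_finite_iUnion.2 hint
  have hintT1 : IntegrableOn (fun u => v (selP fhat ahat γ u x)) (Set.Ico T 1) volume := by
    refine ((integrableOn_const_iff (C := v (ahat x))).2 (Or.inr measure_Ico_lt_top)).congr_fun ?_ measurableSet_Ico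
    intro u hu
    exact (hahsel u hu).symm
  have hsplit : ∫ u in Set.Ico (0:ℝ) 1, v (selP fhat ahat γ u x) ∂volume
      = (∫ u in Set.Ico (0:ℝ) T, v (selP fhat ahat γ u x) ∂volume)
        + ∫ u in Set.Ico T 1, v (selP fhat ahat γ u x) ∂volume := by
    rw [← Set.Ico_union_Ico_eq_Ico hT0 hT1,
      setIntegral_union (Set.Ico_disjoint_Ico_same) measurableSet_Ico hint0T hintT1]
  have hIco0T : ∫ u in Set.Ico (0:ℝ) T, v (selP fhat ahat γ u x) ∂volume
      = ∑ a, sk fhat ahat γ x a * v a := by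
    rw [← hunion, integral_iUnion_fintype (fun a => measurableSet_Ico) hdisj hint]
    exact Finset.sum_congr rfl fun a _ => hpieceval a
  have hIcoT1 : ∫ u in Set.Ico T 1, v (selP fhat ahat γ u x) ∂volume
      = (1 - T) * v (ahat x) := by
    rw [setIntegral_congr_fun measurableSet_Ico hahsel, setIntegral_const,
      measureReal_def, Real.volume_Ico, ENNReal.toReal_ofReal (sub_nonneg.2 hT1), smul_eq_mul]
  have hker : ∀ a : Fin K, selKernel K fhat ahat γ x a * v a
      = sk fhat ahat γ x a * v a + (if a = ahat x then (1 - T) * v a else 0) := by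
    intro a
    rw [kernel_eq a, add_mul, ite_mul, zero_mul]
  rw [hsplit, hIco0T, hIcoT1, Finset.sum_congr rfl fun a _ => hker a,
    Finset.sum_add_distrib, Finset.sum_ite_eq' univ (ahat x)
      (fun a => (1 - T) * v a), if_pos (mem_univ _)]

end IntegralLemma

section Meas

variable [MeasurableSpace X] (hK : 0 < K)
  (hfhatm : ∀ a, Measurable fun x => fhat x a)
  (hah : ∀ x b, fhat x b ≤ fhat x (ahat x))

include hK hfhatm hah

lemma meas_Mm : Measurable fun x => fhat x (ahat x) := by
  haveI : Nonempty (Fin K) := ⟨⟨0, hK⟩⟩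
  have h : (fun x => fhat x (ahat x))
      = (univ : Finset (Fin K)).sup' univ_nonempty (fun b x => fhat x b) := by
    funext x
    rw [Finset.sup'_apply]
    exact le_antisymm (Finset.le_sup' (f := fun b => fhat x b) (mem_univ (ahat x)))
      (Finset.sup'_le _ _ fun b _ => hah x b)
  rw [h]
  exact Finset.measurable_sup' _ fun b _ => hfhatm b

lemma meas_sk (b : Fin K) : Measurable fun x => sk fhat ahat γ x b := by
  have h := ((meas_Mm hK hfhatm hah).sub (hfhatm b)).const_mul γ
  exact measurable_const.div (measurable_const.add h)

lemma meas_Phi (a : Fin K) : Measurable fun x => Phi fhat ahat γ x a :=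
  Finset.measurable_sum _ fun b _ => meas_sk hK hfhatm hah b

lemma meas_Phi' (a : Fin K) : Measurable fun x => Phi' fhat ahat γ x a :=
  Finset.measurable_sum _ fun b _ => meas_sk hK hfhatm hah b

lemma meas_Tot : Measurable fun x => Tot fhat ahat γ x :=
  Finset.measurable_sum _ fun b _ => meas_sk hK hfhatm hah b

end Meas

end SelAux

open SelAux in
/-- Lemma 8 (expected true regret of the action selection kernel), with `C₀ = 5.15`.
If for every policy `π`, `Reg(π) ≤ 2 Reg_{fhat}(π) + C₀K/γ`, where
`Reg(π) = E_{x∼μ}[fstar(x,π*(x)) − fstar(x,π(x))]` and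
`Reg_{fhat}(π) = E_{x∼μ}[fhat(x,â(x)) − fhat(x,π(x))]`, then the expected true regret of the
action selection kernel `p` associated with `fhat` and `γ` satisfies
`E_{x∼μ}[Σ_a p(a|x)(fstar(x,π*(x)) − fstar(x,a))] ≤ (2 + C₀)K/γ`. -/
theorem selKernel_expected_true_regret {X : Type*} [MeasurableSpace X]
    (μ : Measure X) [IsProbabilityMeasure μ]
    (K : ℕ) (hK : 2 ≤ K)
    (fstar fhat : X → Fin K → ℝ)
    (hfstarm : ∀ a, Measurable fun x => fstar x a)
    (hfhatm : ∀ a, Measurable fun x => fhat x a)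
    (hfstar : ∀ x a, fstar x a ∈ Set.Icc (0:ℝ) 1)
    (hfhat : ∀ x a, fhat x a ∈ Set.Icc (0:ℝ) 1)
    (γ : ℝ) (hγ : 0 < γ)
    (pistar ahat : X → Fin K)
    (hpistar : ∀ x a, fstar x a ≤ fstar x (pistar x))
    (hahat : ∀ x a, fhat x a ≤ fhat x (ahat x))
    (hreg : ∀ π : X → Fin K,
      (∫ x, (fstar x (pistar x) - fstar x (π x)) ∂μ)
        ≤ 2 * (∫ x, (fhat x (ahat x) - fhat x (π x)) ∂μ) + 5.15 * K / γ) :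
    ∫ x, ∑ a : Fin K, selKernel K fhat ahat γ x a * (fstar x (pistar x) - fstar x a) ∂μ
      ≤ (2 + 5.15) * K / γ := by
  classical
  have hK0 : 0 < K := lt_of_lt_of_le two_pos hK
  have hKR : (0:ℝ) < K := by exact_mod_cast hK0
  by_cases hSint : Integrable
      (fun x => ∑ a : Fin K, selKernel K fhat ahat γ x a * (fstar x (pistar x) - fstar x a)) μ
  swap
  · rw [integral_undef hSint]
    have : (0:ℝ) ≤ (2 + 5.15) * K / γ := by positivity
    exact this
  set ν : Measure ℝ := volume.restrict (Set.Ico (0:ℝ) 1) with hν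
  haveI hνprob : IsProbabilityMeasure ν := by
    constructor
    rw [hν, Measure.restrict_apply_univ, Real.volume_Ico]
    norm_num
  -- bounds
  have hgb : ∀ x (a : Fin K), ‖fstar x (pistar x) - fstar x a‖ ≤ 1 := by
    intro x a
    have h1 := hfstar x (pistar x); have h2 := hfstar x a
    rw [Real.norm_eq_abs, abs_le]
    exact ⟨by linarith [h1.1, h2.2], by linarith [h1.2, h2.1]⟩
  have hhb : ∀ x (a : Fin K), ‖fhat x (ahat x) - fhat x a‖ ≤ 1 := by
    intro x a
    have h1 := hfhat x (ahat x); have h2 := hfhat x a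
    rw [Real.norm_eq_abs, abs_le]
    exact ⟨by linarith [h1.1, h2.2], by linarith [h1.2, h2.1]⟩
  set f1 : X → ℝ → ℝ := fun x u => fstar x (pistar x) - fstar x (selP fhat ahat γ u x) with hf1
  set f2 : X → ℝ → ℝ := fun x u => fhat x (ahat x) - fhat x (selP fhat ahat γ u x) with hf2
  have hA : ∀ x, ∫ u, f1 x u ∂ν
      = ∑ a : Fin K, selKernel K fhat ahat γ x a * (fstar x (pistar x) - fstar x a) := by
    intro x
    rw [hν]
    exact integral_selP hγ hK0 (hahat x) (fun a => fstar x (pistar x) - fstar x a)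
  have hAh : ∀ x, ∫ u, f2 x u ∂ν
      = ∑ a : Fin K, selKernel K fhat ahat γ x a * (fhat x (ahat x) - fhat x a) := by
    intro x
    rw [hν]
    exact integral_selP hγ hK0 (hahat x) (fun a => fhat x (ahat x) - fhat x a)
  -- measurability ingredients
  have hMs : Measurable fun x => fstar x (pistar x) := meas_Mm hK0 hfstarm hpistar
  have hMm : Measurable fun x => fhat x (ahat x) := meas_Mm hK0 hfhatm hahat
  have hPhiM : ∀ a : Fin K, Measurable fun x => Phi fhat ahat γ x a := meas_Phi hK0 hfhatm hahat
  have hPhi'M : ∀ a : Fin K, Measurable fun x => Phi' fhat ahat γ x a := meas_Phi' hK0 hfhatm hahat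
  have hTotM : Measurable fun x => Tot fhat ahat γ x := meas_Tot hK0 hfhatm hahat
  have hskM : ∀ b : Fin K, Measurable fun x => sk fhat ahat γ x b := meas_sk hK0 hfhatm hahat
  set pieceZ : Fin K → Set (X × ℝ) := fun a =>
    {z : X × ℝ | Phi' fhat ahat γ z.1 a ≤ z.2 ∧ z.2 < Phi fhat ahat γ z.1 a} with hpieceZ
  have hpieceZm : ∀ a, MeasurableSet (pieceZ a) := fun a =>
    (measurableSet_le ((hPhi'M a).comp measurable_fst) measurable_snd).inter
      (measurableSet_lt measurable_snd ((hPhiM a).comp measurable_fst))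
  set tailZ : Set (X × ℝ) := {z : X × ℝ | Tot fhat ahat γ z.1 ≤ z.2} with htailZ
  have htailZm : MeasurableSet tailZ :=
    measurableSet_le (hTotM.comp measurable_fst) measurable_snd
  -- the non-measurable correction term
  have hT'meas : Measurable
      (fun x => ∑ a : Fin K, sk fhat ahat γ x a * (fstar x (pistar x) - fstar x a)) :=
    Finset.measurable_sum _ fun a _ => (hskM a).mul (hMs.sub (hfstarm a))
  set W : X → ℝ := fun x =>
    (∑ a : Fin K, selKernel K fhat ahat γ x a * (fstar x (pistar x) - fstar x a))
      - ∑ a : Fin K, sk fhat ahat γ x a * (fstar x (pistar x) - fstar x a) with hW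
  have hWaesm : AEStronglyMeasurable W μ :=
    hSint.aestronglyMeasurable.sub hT'meas.aestronglyMeasurable
  have hWid : ∀ x, W x
      = (1 - Tot fhat ahat γ x) * (fstar x (pistar x) - fstar x (ahat x)) := by
    intro x
    have hx : W x = (∑ a : Fin K, selKernel K fhat ahat γ x a * (fstar x (pistar x) - fstar x a))
        - ∑ a : Fin K, sk fhat ahat γ x a * (fstar x (pistar x) - fstar x a) := rfl
    rw [hx]
    have h1 : ∀ a : Fin K, selKernel K fhat ahat γ x a * (fstar x (pistar x) - fstar x a)
        = sk fhat ahat γ x a * (fstar x (pistar x) - fstar x a)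
          + (if a = ahat x then (1 - Tot fhat ahat γ x) * (fstar x (pistar x) - fstar x a)
              else 0) := by
      intro a
      rw [kernel_eq a, add_mul, ite_mul, zero_mul]
    rw [Finset.sum_congr rfl fun a _ => h1 a, Finset.sum_add_distrib,
      Finset.sum_ite_eq' univ (ahat x)
        (fun a => (1 - Tot fhat ahat γ x) * (fstar x (pistar x) - fstar x a)),
      if_pos (mem_univ _)]
    ring
  set W' : X → ℝ := hWaesm.mk W with hW'
  have hW'sm : StronglyMeasurable W' := hWaesm.stronglyMeasurable_mk
  have hWW' : W =ᵐ[μ] W' := hWaesm.ae_eq_mk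
  -- measurable representatives on the product space
  set G1 : X × ℝ → ℝ := fun z =>
    (∑ a : Fin K, (pieceZ a).indicator (fun w => fstar w.1 (pistar w.1) - fstar w.1 a) z)
      + tailZ.indicator (fun w => W' w.1 / (1 - Tot fhat ahat γ w.1)) z with hG1
  have hG1m : Measurable G1 := by
    apply Measurable.add
    · exact Finset.measurable_sum _ fun a _ =>
        ((hMs.comp measurable_fst).sub ((hfstarm a).comp measurable_fst)).indicator
          (hpieceZm a)
    · exact ((hW'sm.measurable.comp measurable_fst).div
        (measurable_const.sub (hTotM.comp measurable_fst))).indicator htailZm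
  set G2 : X × ℝ → ℝ := fun z =>
    ∑ a : Fin K, (pieceZ a).indicator (fun w => fhat w.1 (ahat w.1) - fhat w.1 a) z with hG2
  have hG2m : Measurable G2 :=
    Finset.measurable_sum _ fun a _ =>
      ((hMm.comp measurable_fst).sub ((hfhatm a).comp measurable_fst)).indicator (hpieceZm a)
  -- a.e. facts on the product
  have hsnd : ∀ᵐ z : X × ℝ ∂μ.prod ν, z.2 ∈ Set.Ico (0:ℝ) 1 :=
    Measure.quasiMeasurePreserving_snd.ae
      (by rw [hν]; exact ae_restrict_mem measurableSet_Ico)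
  have hfst : ∀ᵐ z : X × ℝ ∂μ.prod ν, W z.1 = W' z.1 :=
    Measure.quasiMeasurePreserving_fst.ae hWW'
  -- pointwise identification
  have hae1 : (Function.uncurry f1) =ᵐ[μ.prod ν] G1 := by
    filter_upwards [hsnd, hfst] with z hz2 hzW
    obtain ⟨x, u⟩ := z
    have hz20 : (0:ℝ) ≤ u := hz2.1
    have hz21 : u < 1 := hz2.2
    have hzW' : W x = W' x := hzW
    show f1 x u = G1 (x, u)
    have hG1x : G1 (x, u)
        = (∑ a : Fin K,
            (pieceZ a).indicator (fun w => fstar w.1 (pistar w.1) - fstar w.1 a) (x, u))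
          + tailZ.indicator (fun w => W' w.1 / (1 - Tot fhat ahat γ w.1)) (x, u) := rfl
    rw [hG1x]
    by_cases hu : u < Tot fhat ahat γ x
    · obtain ⟨h1, h2⟩ := selP_mem hγ hK0 (hahat x) hz20 hu
      have htail0 : (x, u) ∉ tailZ := fun hmem => absurd hu (not_lt.2 hmem)
      rw [Set.indicator_of_notMem htail0, add_zero,
        Finset.sum_eq_single (selP fhat ahat γ u x)
          (fun a _ ha => Set.indicator_of_notMem
            (fun hmem => ha (selP_eq_of_mem hγ hK0 (hahat x) hmem.1 hmem.2).symm) _)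
          (fun h => absurd (mem_univ _) h),
        Set.indicator_of_mem
          (show (x, u) ∈ pieceZ (selP fhat ahat γ u x) from ⟨h1, h2⟩)]
    · push_neg at hu
      have hsel : selP fhat ahat γ u x = ahat x :=
        selP_eq_ahat (Phi_le_Tot hγ hK0 (hahat x)) hu
      have hne : (1 - Tot fhat ahat γ x) ≠ 0 := by
        have := lt_of_le_of_lt hu hz21; linarith
      have hsum0 : (∑ a : Fin K,
          (pieceZ a).indicator (fun w => fstar w.1 (pistar w.1) - fstar w.1 a) (x, u)) = 0 :=
        Finset.sum_eq_zero fun a _ => Set.indicator_of_notMem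
          (fun hmem => absurd
            (lt_of_lt_of_le hmem.2 (le_trans (Phi_le_Tot hγ hK0 (hahat x) a) hu))
            (lt_irrefl u)) _
      rw [hsum0, zero_add, Set.indicator_of_mem (show (x, u) ∈ tailZ from hu)]
      show fstar x (pistar x) - fstar x (selP fhat ahat γ u x)
          = W' x / (1 - Tot fhat ahat γ x)
      rw [hsel, ← hzW', hWid x, mul_div_cancel_left₀ _ hne]
  have hae2 : (Function.uncurry f2) =ᵐ[μ.prod ν] G2 := by
    filter_upwards [hsnd] with z hz2
    obtain ⟨x, u⟩ := z
    have hz20 : (0:ℝ) ≤ u := hz2.1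
    show f2 x u = G2 (x, u)
    have hG2x : G2 (x, u)
        = ∑ a : Fin K,
            (pieceZ a).indicator (fun w => fhat w.1 (ahat w.1) - fhat w.1 a) (x, u) := rfl
    rw [hG2x]
    by_cases hu : u < Tot fhat ahat γ x
    · obtain ⟨h1, h2⟩ := selP_mem hγ hK0 (hahat x) hz20 hu
      rw [Finset.sum_eq_single (selP fhat ahat γ u x)
          (fun a _ ha => Set.indicator_of_notMem
            (fun hmem => ha (selP_eq_of_mem hγ hK0 (hahat x) hmem.1 hmem.2).symm) _)
          (fun h => absurd (mem_univ _) h),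
        Set.indicator_of_mem
          (show (x, u) ∈ pieceZ (selP fhat ahat γ u x) from ⟨h1, h2⟩)]
    · push_neg at hu
      have hsel : selP fhat ahat γ u x = ahat x :=
        selP_eq_ahat (Phi_le_Tot hγ hK0 (hahat x)) hu
      have hsum0 : (∑ a : Fin K,
          (pieceZ a).indicator (fun w => fhat w.1 (ahat w.1) - fhat w.1 a) (x, u)) = 0 :=
        Finset.sum_eq_zero fun a _ => Set.indicator_of_notMem
          (fun hmem => absurd
            (lt_of_lt_of_le hmem.2 (le_trans (Phi_le_Tot hγ hK0 (hahat x) a) hu))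
            (lt_irrefl u)) _
      rw [hsum0]
      show fhat x (ahat x) - fhat x (selP fhat ahat γ u x) = 0
      rw [hsel, sub_self]
  -- product integrability
  have hF1 : Integrable (Function.uncurry f1) (μ.prod ν) := by
    refine Integrable.mono' (integrable_const 1)
      ⟨G1, hG1m.stronglyMeasurable, hae1⟩ ?_
    exact Filter.Eventually.of_forall fun z => hgb z.1 _
  have hF2 : Integrable (Function.uncurry f2) (μ.prod ν) := by
    refine Integrable.mono' (integrable_const 1)
      ⟨G2, hG2m.stronglyMeasurable, hae2⟩ ?_
    exact Filter.Eventually.of_forall fun z => hhb z.1 _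
  -- pointwise bound for the fhat-regret of the kernel (Lemma 5)
  have hSh : ∀ x, ∑ a : Fin K, selKernel K fhat ahat γ x a * (fhat x (ahat x) - fhat x a)
      ≤ K / γ := by
    intro x
    have h1 : ∀ a : Fin K, selKernel K fhat ahat γ x a * (fhat x (ahat x) - fhat x a)
        = sk fhat ahat γ x a * (fhat x (ahat x) - fhat x a) := by
      intro a
      by_cases hax : a = ahat x
      · rw [hax, sub_self, mul_zero, mul_zero]
      · rw [kernel_eq a, if_neg hax, add_zero]
    rw [Finset.sum_congr rfl fun a _ => h1 a]
    have h2 : ∀ a : Fin K, sk fhat ahat γ x a * (fhat x (ahat x) - fhat x a) ≤ 1/γ := by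
      intro a
      have hden := denom_pos hγ hK0 (hahat x) a
      have hh : 0 ≤ fhat x (ahat x) - fhat x a := sub_nonneg.2 (hahat x a)
      have hrw : sk fhat ahat γ x a * (fhat x (ahat x) - fhat x a)
          = (fhat x (ahat x) - fhat x a)
            / ((K:ℝ) + γ * (fhat x (ahat x) - fhat x a)) := by
        simp only [sk]
        rw [one_div_mul_eq_div]
      rw [hrw, div_le_div_iff₀ hden hγ]
      nlinarith
    calc ∑ a : Fin K, sk fhat ahat γ x a * (fhat x (ahat x) - fhat x a)
        ≤ ∑ _a : Fin K, 1/γ := Finset.sum_le_sum fun a _ => h2 a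
      _ = K / γ := by
        simp only [Finset.sum_const, Finset.card_univ, Fintype.card_fin, nsmul_eq_mul]
        rw [mul_one_div]
  have hI1 : Integrable (fun u => ∫ x, f1 x u ∂μ) ν := by
    simpa [Function.uncurry_apply_pair] using hF1.integral_prod_right
  have hI2 : Integrable (fun u => ∫ x, f2 x u ∂μ) ν := by
    simpa [Function.uncurry_apply_pair] using hF2.integral_prod_right
  have hI2' : Integrable (fun x => ∫ u, f2 x u ∂ν) μ := by
    simpa [Function.uncurry_apply_pair] using hF2.integral_prod_left
  -- assembling everything
  calc ∫ x, ∑ a : Fin K, selKernel K fhat ahat γ x a * (fstar x (pistar x) - fstar x a) ∂μ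
      = ∫ x, ∫ u, f1 x u ∂ν ∂μ := by
        exact integral_congr_ae (Filter.Eventually.of_forall fun x => (hA x).symm)
    _ = ∫ u, ∫ x, f1 x u ∂μ ∂ν := integral_integral_swap hF1
    _ ≤ ∫ u, (2 * (∫ x, f2 x u ∂μ) + 5.15 * K / γ) ∂ν := by
        refine integral_mono hI1 ?_ ?_
        · exact (hI2.const_mul 2).add (integrable_const _)
        · intro u
          exact hreg (fun x => selP fhat ahat γ u x)
    _ = 2 * (∫ u, ∫ x, f2 x u ∂μ ∂ν) + 5.15 * K / γ := by
        rw [integral_add (hI2.const_mul 2) (integrable_const _),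
          integral_const_mul, integral_const, measureReal_def, measure_univ, ENNReal.toReal_one, one_smul]
    _ ≤ 2 * (K / γ) + 5.15 * K / γ := by
        have hswap2 : ∫ u, ∫ x, f2 x u ∂μ ∂ν = ∫ x, ∫ u, f2 x u ∂ν ∂μ :=
          (integral_integral_swap hF2).symm
        have hint : Integrable (fun x => ∫ u, f2 x u ∂ν) μ := hI2'
        have h1 : ∫ x, ∫ u, f2 x u ∂ν ∂μ ≤ K / γ := by
          calc ∫ x, ∫ u, f2 x u ∂ν ∂μ ≤ ∫ _x, K / γ ∂μ := by
                refine integral_mono hint (integrable_const _) ?_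
                intro x
                show (∫ u, f2 x u ∂ν) ≤ K / γ
                rw [hAh x]
                exact hSh x
            _ = K / γ := by
                rw [integral_const, measureReal_def, measure_univ, ENNReal.toReal_one, one_smul]
        rw [hswap2]
        linarith
    _ = (2 + 5.15) * K / γ := by ring
end
end
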